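/- arXiv:1205.6824 — 3 statements merged into one kernel-verified Lean document; each statement's English description precedes it below -/
import Mathlib

section
/- Let P and Q be classes of topological spaces, each closed under homeomorphic images, such that every one-element space belongs to P and P ⊆ Q. Then add(Q) ≤ add(P→Q) ≤ non(Q). -/
open Set Filter Cardinal

/-! Basic framework: classes of topological spaces and selection principles. -/

/-- A class (property) of topological spaces. -/
def SpaceClass : Type 1 := (X : Type) → TopologicalSpace X → Prop

/-- The subspace topology on a subset. -/
def subspaceTop {X : Type} (t : TopologicalSpace X) (S : Set X) : TopologicalSpace ↥S :=
  @instTopologicalSpaceSubtype X (· ∈ S) t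

/-- A subset `S` of `X`, viewed as a subspace, belongs to the class `P`. -/
def memSub (P : SpaceClass) {X : Type} (t : TopologicalSpace X) (S : Set X) : Prop :=
  P ↥S (subspaceTop t S)

/-- The product topology, with explicit topologies. -/
def prodTop {X Y : Type} (t : TopologicalSpace X) (s : TopologicalSpace Y) :
    TopologicalSpace (X × Y) :=
  @instTopologicalSpaceProd X Y t s

/-- A countable open cover of `X` (not containing `X` itself as a member). -/
def IsCountableOpenCover {X : Type} [TopologicalSpace X] (𝒰 : Set (Set X)) : Prop :=
  𝒰.Countable ∧ (∀ U ∈ 𝒰, IsOpen U) ∧ ⋃₀ 𝒰 = Set.univ ∧ Set.univ ∉ 𝒰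

/-- The cover `𝒰` contains a finite subcover. -/
def ContainsFinSubcover {X : Type} [TopologicalSpace X] (𝒰 : Set (Set X)) : Prop :=
  ∃ ℱ : Set (Set X), ℱ ⊆ 𝒰 ∧ ℱ.Finite ∧ ⋃₀ ℱ = Set.univ

/-- Rothberger's property `S1(O,O)`. -/
def IsRothberger (X : Type) [TopologicalSpace X] : Prop :=
  ∀ 𝒰 : ℕ → Set (Set X), (∀ n, IsCountableOpenCover (𝒰 n)) →
    ∃ V : ℕ → Set X, (∀ n, V n ∈ 𝒰 n) ∧ ⋃ n, V n = Set.univ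

/-- Hurewicz's property `Ufin(O,Γ)`. -/
def IsHurewicz (X : Type) [TopologicalSpace X] : Prop :=
  ∀ 𝒰 : ℕ → Set (Set X), (∀ n, IsCountableOpenCover (𝒰 n)) →
    (∀ n, ¬ ContainsFinSubcover (𝒰 n)) →
    ∃ ℱ : ℕ → Set (Set X), (∀ n, ℱ n ⊆ 𝒰 n) ∧ (∀ n, (ℱ n).Finite) ∧
      ∀ x : X, ∀ᶠ n in atTop, x ∈ ⋃₀ (ℱ n)

/-- Menger's property `Sfin(O,O)`. -/
def IsMenger (X : Type) [TopologicalSpace X] : Prop :=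
  ∀ 𝒰 : ℕ → Set (Set X), (∀ n, IsCountableOpenCover (𝒰 n)) →
    ∃ ℱ : ℕ → Set (Set X), (∀ n, ℱ n ⊆ 𝒰 n) ∧ (∀ n, (ℱ n).Finite) ∧
      ⋃ n, ⋃₀ (ℱ n) = Set.univ

/-- The Gerlits–Nagy property: Hurewicz and Rothberger. -/
def IsGerlitsNagy (X : Type) [TopologicalSpace X] : Prop :=
  IsHurewicz X ∧ IsRothberger X

/-- A countable open ω-cover: `X` itself is not a member, and every finite subset of `X`
is contained in some member. -/
def IsOmegaCover {X : Type} [TopologicalSpace X] (𝒰 : Set (Set X)) : Prop :=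
  𝒰.Countable ∧ (∀ U ∈ 𝒰, IsOpen U) ∧ Set.univ ∉ 𝒰 ∧
    ∀ F : Set X, F.Finite → ∃ U ∈ 𝒰, F ⊆ U

/-- A γ-cover: an infinite family, not containing `X`, such that every point of `X`
belongs to all but finitely many members. -/
def IsGammaCover {X : Type} [TopologicalSpace X] (𝒰 : Set (Set X)) : Prop :=
  𝒰.Infinite ∧ Set.univ ∉ 𝒰 ∧ ∀ x : X, {U ∈ 𝒰 | x ∉ U}.Finite

/-- The Gerlits–Nagy γ-property `S1(Ω,Γ)`. -/
def SatisfiesS1OmegaGamma (X : Type) [TopologicalSpace X] : Prop :=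
  ∀ 𝒰 : ℕ → Set (Set X), (∀ n, IsOmegaCover (𝒰 n)) →
    ∃ V : ℕ → Set X, (∀ n, V n ∈ 𝒰 n) ∧ IsGammaCover (range V)

/-! Cardinal characteristics of the continuum. -/

/-- `cov(M)`: the least cardinality of a family of meager subsets of `ℝ` covering `ℝ`. -/
noncomputable def covMeager : Cardinal :=
  sInf { c | ∃ 𝒜 : Set (Set ℝ), #𝒜 = c ∧ (∀ A ∈ 𝒜, IsMeagre A) ∧ ⋃₀ 𝒜 = Set.univ }

/-- `add(M)`: the least cardinality of a family of meager subsets of `ℝ` whose union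
is not meager. -/
noncomputable def addMeager : Cardinal :=
  sInf { c | ∃ 𝒜 : Set (Set ℝ), #𝒜 = c ∧ (∀ A ∈ 𝒜, IsMeagre A) ∧ ¬ IsMeagre (⋃₀ 𝒜) }

/-- `add(N)`: the least cardinality of a family of Lebesgue-null subsets of `ℝ` whose union
is not Lebesgue-null. -/
noncomputable def addNull : Cardinal :=
  sInf { c | ∃ 𝒜 : Set (Set ℝ), #𝒜 = c ∧ (∀ A ∈ 𝒜, MeasureTheory.volume A = 0) ∧
    MeasureTheory.volume (⋃₀ 𝒜) ≠ 0 }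

/-- The dominating number `𝔡`. -/
noncomputable def frakd : Cardinal :=
  sInf { c | ∃ D : Set (ℕ → ℕ), #D = c ∧
    ∀ g : ℕ → ℕ, ∃ f ∈ D, ∀ᶠ n in atTop, g n ≤ f n }

/-- The unbounding number `𝔟`. -/
noncomputable def frakb : Cardinal :=
  sInf { c | ∃ B : Set (ℕ → ℕ), #B = c ∧
    ∀ g : ℕ → ℕ, ∃ f ∈ B, ¬ (∀ᶠ n in atTop, f n ≤ g n) }

/-- A groupwise dense family: a family of infinite subsets of `ℕ`, closed under infinite
subsets, such that for every increasing `h` there is an infinite `I ⊆ ℕ` with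
`⋃ n ∈ I, [h n, h (n+1)) ` in the family. -/
def IsGroupwiseDense (G : Set (Set ℕ)) : Prop :=
  (∀ A ∈ G, A.Infinite) ∧ (∀ A ∈ G, ∀ B, B ⊆ A → B.Infinite → B ∈ G) ∧
  ∀ h : ℕ → ℕ, StrictMono h →
    ∃ I : Set ℕ, I.Infinite ∧ (⋃ n ∈ I, Ico (h n) (h (n + 1))) ∈ G

/-- The groupwise density number `𝔤`. -/
noncomputable def frakg : Cardinal :=
  sInf { c | ∃ 𝒢 : Set (Set (Set ℕ)), #𝒢 = c ∧ (∀ G ∈ 𝒢, IsGroupwiseDense G) ∧ ⋂₀ 𝒢 = ∅ }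

/-! Class operations: additivity, uniformity, productive classes. -/

def RothbergerClass : SpaceClass := fun X t => @IsRothberger X t
def HurewiczClass : SpaceClass := fun X t => @IsHurewicz X t
def MengerClass : SpaceClass := fun X t => @IsMenger X t
def GNClass : SpaceClass := fun X t => @IsGerlitsNagy X t
def GammaPropClass : SpaceClass := fun X t => @SatisfiesS1OmegaGamma X t

/-- `add(P,Q)`: the least cardinal `κ` such that some topological space is the union of
`κ` subspaces, each in `P`, while the union fails `Q`. -/
noncomputable def classAdd (P Q : SpaceClass) : Cardinal :=
  sInf { c | ∃ (X : Type) (t : TopologicalSpace X) (𝒮 : Set (Set X)),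
    #𝒮 = c ∧ ⋃₀ 𝒮 = Set.univ ∧ (∀ S ∈ 𝒮, memSub P t S) ∧ ¬ Q X t }

/-- `non(Q)`: the least cardinality of a space not in `Q`. -/
noncomputable def classNon (Q : SpaceClass) : Cardinal :=
  sInf { c | ∃ (X : Type) (t : TopologicalSpace X), #X = c ∧ ¬ Q X t }

/-- The class `P → Q` of spaces whose product with every member of `P` is in `Q`. -/
def ProductiveClass (P Q : SpaceClass) : SpaceClass := fun X t =>
  ∀ (Y : Type) (s : TopologicalSpace Y), P Y s → Q (X × Y) (prodTop t s)

/-- The class `P` is closed under homeomorphic images. -/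
def ClosedUnderHomeo (P : SpaceClass) : Prop :=
  ∀ (X Y : Type) (t : TopologicalSpace X) (s : TopologicalSpace Y),
    Nonempty (@Homeomorph X Y t s) → P X t → P Y s

/-- Every one-element space belongs to `P`. -/
def ContainsSingletons (P : SpaceClass) : Prop :=
  ∀ (X : Type) (t : TopologicalSpace X), (∃ x : X, ∀ y : X, y = x) → P X t

/-! Concentrated spaces and related hierarchies. -/

/-- A space is `λ`-concentrated if there is a countable `D ⊆ X` such that
`|X \ U| < λ` for every open `U ⊇ D`. -/
def IsLambdaConcentrated (lam : Cardinal) (X : Type) [TopologicalSpace X] : Prop :=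
  ∃ D : Set X, D.Countable ∧ ∀ U : Set X, IsOpen U → D ⊆ U → #↥(Uᶜ) < lam

/-- The space `X` is a union of fewer than `λ` compact subspaces (the class `K_λ`). -/
def IsKUnion (lam : Cardinal) (X : Type) [TopologicalSpace X] : Prop :=
  ∃ 𝒮 : Set (Set X), #𝒮 < lam ∧ (∀ S ∈ 𝒮, IsCompact S) ∧ ⋃₀ 𝒮 = Set.univ

/-- A σ-compact subset: a countable union of compact sets. -/
def IsSigmaCompactSet {X : Type} [TopologicalSpace X] (D : Set X) : Prop :=
  ∃ f : ℕ → Set X, (∀ n, IsCompact (f n)) ∧ D = ⋃ n, f n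

/-- A space is `K_λ`-concentrated if there is a σ-compact `D ⊆ X` such that
`X \ U ∈ K_λ` for every open `U ⊇ D`. -/
def IsKConcentrated (lam : Cardinal) (X : Type) [TopologicalSpace X] : Prop :=
  ∃ D : Set X, IsSigmaCompactSet D ∧ ∀ U : Set X, IsOpen U → D ⊆ U →
    IsKUnion lam ↥(Uᶜ)

/-- Successor step of the hierarchy `C_α(κ)`. -/
def CHierStep (kappa : Cardinal) (P : SpaceClass) : SpaceClass := fun X t =>
  @RegularSpace X t ∧
    ((∃ D : Set X, D.Countable ∧ ∀ U : Set X, @IsOpen X t U → D ⊆ U → memSub P t Uᶜ) ∨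
     (∃ 𝒮 : Set (Set X), #𝒮 < kappa.ord.cof ∧ ⋃₀ 𝒮 = Set.univ ∧ ∀ S ∈ 𝒮, memSub P t S))

/-- The hierarchy `C_α(κ)`: `C_0(κ)` is the class of regular spaces of cardinality `< κ`;
`C_{α+1}(κ)` consists of the regular spaces `C` such that either there is a countable
`D ⊆ C` with `C \ U ∈ C_α(κ)` for every open `U ⊇ D`, or `C` is a union of fewer than
`cf(κ)` members of `C_α(κ)`; at limits we take unions. -/
noncomputable def CHier (kappa : Cardinal) (α : Ordinal) : SpaceClass :=
  Ordinal.limitRecOn α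
    (fun X t => @RegularSpace X t ∧ #X < kappa)
    (fun _ P => CHierStep kappa P)
    (fun o _ ih => fun X t => ∃ β, ∃ h : β < o, ih β h X t)

/-- Successor step of the hierarchy `K_α(κ)`. -/
def KHierStep (kappa : Cardinal) (P : SpaceClass) : SpaceClass := fun X t =>
  @RegularSpace X t ∧
    ((∃ D : Set X, @IsSigmaCompactSet X t D ∧
        ∀ U : Set X, @IsOpen X t U → D ⊆ U → memSub P t Uᶜ) ∨
     (∃ 𝒮 : Set (Set X), #𝒮 < kappa.ord.cof ∧ ⋃₀ 𝒮 = Set.univ ∧ ∀ S ∈ 𝒮, memSub P t S))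

/-- The hierarchy `K_α(κ)`: `K_0(κ)` is the class of regular spaces that are unions of
fewer than `κ` compact subspaces; `K_{α+1}(κ)` consists of the regular spaces `C` such
that either there is a σ-compact `D ⊆ C` with `C \ U ∈ K_α(κ)` for every open `U ⊇ D`,
or `C` is a union of fewer than `cf(κ)` members of `K_α(κ)`; at limits we take unions. -/
noncomputable def KHier (kappa : Cardinal) (α : Ordinal) : SpaceClass :=
  Ordinal.limitRecOn α
    (fun X t => @RegularSpace X t ∧ @IsKUnion kappa X t)
    (fun _ P => KHierStep kappa P)
    (fun o _ ih => fun X t => ∃ β, ∃ h : β < o, ih β h X t)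

/-- The space embeds in a compact Hausdorff space. -/
def EmbedsInCompactHausdorff (X : Type) [TopologicalSpace X] : Prop :=
  ∃ (K : Type) (tK : TopologicalSpace K), @CompactSpace K tK ∧ @T2Space K tK ∧
    ∃ e : X → K, @Topology.IsEmbedding X K _ tK e

/-- Tychonoff space: completely regular and T1. -/
def IsTychonoff (X : Type) [TopologicalSpace X] : Prop :=
  T1Space X ∧ CompletelyRegularSpace X

/-!
Every space is the union of its singletons, and a singleton `{z}` lies in `P → Q` because
`{z} × Y ≃ₜ Y`. Since a one-point space is in `P` and `X × {pt} ≃ₜ X`, the class `P → Q` is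
contained in `Q`. Hence a space outside `Q` is a union of `#X` members of `P → Q` that is not
in `P → Q`, which gives `add(P→Q) ≤ non(Q)`. If instead a union `X = ⋃ 𝒮` of members of `P → Q`
fails `P → Q`, witnessed by `Y ∈ P` with `X × Y ∉ Q`, then the sets `S × Y` for `S ∈ 𝒮` are in
`Q` and cover `X × Y`, which gives `add(Q) ≤ add(P→Q)`.
-/

theorem csInf_le_csInf_of_forall_exists_le {α : Type*} [ConditionallyCompleteLinearOrderBot α]
    {s t : Set α} (h : ∀ b ∈ t, ∃ a ∈ s, a ≤ b) (hst : s.Nonempty → t.Nonempty) :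
    sInf s ≤ sInf t := by
  rcases t.eq_empty_or_nonempty with rfl | ht
  · rw [not_nonempty_iff_eq_empty.mp (mt hst not_nonempty_empty)]
  · refine le_csInf ht fun b hb => ?_
    obtain ⟨a, ha, hab⟩ := h b hb
    exact (csInf_le' ha).trans hab

def classAddSet (P Q : SpaceClass) : Set Cardinal :=
  { c | ∃ (X : Type) (t : TopologicalSpace X) (𝒮 : Set (Set X)),
    #𝒮 = c ∧ ⋃₀ 𝒮 = Set.univ ∧ (∀ S ∈ 𝒮, memSub P t S) ∧ ¬ Q X t }

def classNonSet (Q : SpaceClass) : Set Cardinal :=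
  { c | ∃ (X : Type) (t : TopologicalSpace X), #X = c ∧ ¬ Q X t }

theorem classAdd_eq_sInf (P Q : SpaceClass) : classAdd P Q = sInf (classAddSet P Q) := rfl

theorem classNon_eq_sInf (Q : SpaceClass) : classNon Q = sInf (classNonSet Q) := rfl

theorem mk_mem_classAddSet_of_memSub_singleton {P Q : SpaceClass} {X : Type}
    {t : TopologicalSpace X} (hsing : ∀ z : X, memSub P t {z}) (hX : ¬ Q X t) :
    #X ∈ classAddSet P Q := by
  refine ⟨X, t, range fun z : X => ({z} : Set X), mk_range_eq _ singleton_injective, ?_, ?_, hX⟩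
  · rw [sUnion_range, iUnion_of_singleton]
  · rintro _ ⟨z, rfl⟩
    exact hsing z

section ProductiveClass

variable {P Q : SpaceClass}

theorem ProductiveClass.exists_not_prod {X : Type} {t : TopologicalSpace X}
    (hX : ¬ ProductiveClass P Q X t) :
    ∃ (Y : Type) (s : TopologicalSpace Y), P Y s ∧ ¬ Q (X × Y) (prodTop t s) := by
  simpa [ProductiveClass] using hX

theorem ProductiveClass.memSub_singleton (hQ : ClosedUnderHomeo Q)
    (hPQ : ∀ (X : Type) (t : TopologicalSpace X), P X t → Q X t)
    {X : Type} (t : TopologicalSpace X) (z : X) :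
    memSub (ProductiveClass P Q) t {z} := fun Y s hY =>
  hQ Y _ s _ ⟨(Homeomorph.uniqueProd ↥({z} : Set X) Y).symm⟩ (hPQ Y s hY)

theorem ProductiveClass.to_right (hQ : ClosedUnderHomeo Q) (hone : ContainsSingletons P)
    {X : Type} {t : TopologicalSpace X} (hX : ProductiveClass P Q X t) : Q X t :=
  hQ _ X _ t ⟨Homeomorph.prodPUnit X⟩ (hX PUnit _ (hone PUnit _ ⟨PUnit.unit, fun _ => rfl⟩))

theorem ProductiveClass.memSub_prod_univ (hQ : ClosedUnderHomeo Q) {X Y : Type}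
    {t : TopologicalSpace X} {s : TopologicalSpace Y} {S : Set X}
    (hS : memSub (ProductiveClass P Q) t S) (hY : P Y s) :
    memSub Q (prodTop t s) (S ×ˢ (Set.univ : Set Y)) := by
  refine hQ _ _ (prodTop (subspaceTop t S) s) _ ⟨?_⟩ (hS Y s hY)
  exact ((Homeomorph.Set.prod S Set.univ).trans
    ((Homeomorph.refl S).prodCongr (Homeomorph.Set.univ Y))).symm

end ProductiveClass

theorem sUnion_image_prod_univ {X Y : Type} {𝒮 : Set (Set X)} (h𝒮 : ⋃₀ 𝒮 = Set.univ) :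
    ⋃₀ ((· ×ˢ (Set.univ : Set Y)) '' 𝒮) = Set.univ := by
  rw [sUnion_image, ← iUnion₂_prod_const, ← sUnion_eq_biUnion, h𝒮, univ_prod_univ]

theorem classAdd_le_classAdd_productive_general (P Q : SpaceClass)
    (hQ : ClosedUnderHomeo Q) (hone : ContainsSingletons P)
    (hPQ : ∀ (X : Type) (t : TopologicalSpace X), P X t → Q X t) :
    classAdd Q Q ≤ classAdd (ProductiveClass P Q) (ProductiveClass P Q) ∧
      classAdd (ProductiveClass P Q) (ProductiveClass P Q) ≤ classNon Q := by
  have mk_mem {X : Type} {t : TopologicalSpace X} (hX : ¬ Q X t) :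
      #X ∈ classAddSet (ProductiveClass P Q) (ProductiveClass P Q) :=
    mk_mem_classAddSet_of_memSub_singleton (ProductiveClass.memSub_singleton hQ hPQ t)
      (mt (ProductiveClass.to_right hQ hone) hX)
  simp only [classAdd_eq_sInf, classNon_eq_sInf]
  refine ⟨csInf_le_csInf_of_forall_exists_le ?_ ?_, csInf_le_csInf_of_forall_exists_le ?_ ?_⟩
  · rintro _ ⟨X, t, 𝒮, rfl, h𝒮, hsub, hX⟩
    obtain ⟨Y, s, hY, hXY⟩ := ProductiveClass.exists_not_prod hX
    refine ⟨_, ⟨X × Y, prodTop t s, _, rfl, sUnion_image_prod_univ h𝒮, ?_, hXY⟩, mk_image_le⟩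
    rintro _ ⟨S, hS, rfl⟩
    exact ProductiveClass.memSub_prod_univ hQ (hsub S hS) hY
  · rintro ⟨_, X, t, _, -, -, -, hX⟩
    exact ⟨_, mk_mem hX⟩
  · rintro _ ⟨X, t, rfl, hX⟩
    exact ⟨_, mk_mem hX, le_rfl⟩
  · rintro ⟨_, X, t, _, -, -, -, hX⟩
    obtain ⟨Y, s, -, hXY⟩ := ProductiveClass.exists_not_prod hX
    exact ⟨_, X × Y, prodTop t s, rfl, hXY⟩

/-- For classes `P, Q` closed under homeomorphic images, with every one-element space in `P`
and `P ⊆ Q`: `add(Q) ≤ add(P→Q) ≤ non(Q)`. -/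
theorem classAdd_le_classAdd_productive (P Q : SpaceClass)
    (hP : ClosedUnderHomeo P) (hQ : ClosedUnderHomeo Q) (hone : ContainsSingletons P)
    (hPQ : ∀ (X : Type) (t : TopologicalSpace X), P X t → Q X t) :
    classAdd Q Q ≤ classAdd (ProductiveClass P Q) (ProductiveClass P Q) ∧
      classAdd (ProductiveClass P Q) (ProductiveClass P Q) ≤ classNon Q :=
  classAdd_le_classAdd_productive_general P Q hQ hone hPQ
end

section
/- add(Ufin(O,Γ), Sfin(O,O)) = 𝔡: the least cardinal κ such that some topological space is the union of κ subspaces, each having the Hurewicz property, while the union itself fails Menger's property, is exactly the dominating number 𝔡. -/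
open Set Filter Cardinal

/-! Baire space `ℕ → ℕ` is a union of `𝔡` compact sets `{g | g ≤ f}` but is not Menger, so
`add ≤ 𝔡`. Conversely, for a Hurewicz subspace `S` and enumerated open covers `U n` of `X`,
some `f_S : ℕ → ℕ` has every point of `S` eventually in `⋃ j ≤ f_S n, U n j`. Given fewer
than `𝔡` such subspaces, some `g` is not dominated by any `f_S`, and the finite families
`{U n j | j ≤ g n}` witness that the union is Menger. -/

lemma Monotone.exists_sUnion_subset {α : Type*} {V : ℕ → Set α} (hV : Monotone V)
    {ℱ : Set (Set α)} (hℱ : ℱ.Finite) (hsub : ∀ A ∈ ℱ, ∃ k, A ⊆ V k) :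
    ∃ m, ⋃₀ ℱ ⊆ V m := by
  have hev : ∀ᶠ m in atTop, ∀ A ∈ ℱ, A ⊆ V m :=
    hℱ.eventually_all.2 fun A hA =>
      let ⟨k, hk⟩ := hsub A hA
      eventually_atTop.2 ⟨k, fun _ hm => hk.trans (hV hm)⟩
  obtain ⟨m, hm⟩ := hev.exists
  exact ⟨m, sUnion_subset hm⟩

section Covers

variable {Y : Type} [TopologicalSpace Y]

lemma ContainsFinSubcover.of_refines {𝒱 𝒞 : Set (Set Y)} (h𝒱 : ContainsFinSubcover 𝒱)
    (href : ∀ A ∈ 𝒱, ∃ C ∈ 𝒞, A ⊆ C) : ContainsFinSubcover 𝒞 := by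
  obtain ⟨ℱ, hℱsub, hℱfin, hℱcov⟩ := h𝒱
  choose! c hc𝒞 hc using fun A (hA : A ∈ ℱ) => href A (hℱsub hA)
  refine ⟨c '' ℱ, image_subset_iff.2 hc𝒞, hℱfin.image c, eq_univ_of_univ_subset ?_⟩
  rw [← hℱcov]
  exact sUnion_subset fun A hA => (hc A hA).trans (subset_sUnion_of_mem (mem_image_of_mem c hA))

lemma isHurewicz_of_compactSpace [CompactSpace Y] : IsHurewicz Y := by
  intro 𝒰 h𝒰 hnofin
  obtain ⟨ℱ, hℱsub, hℱfin, hℱcov⟩ := isCompact_univ.elim_finite_subcover_image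
    (c := fun U => U) (h𝒰 0).2.1 (by rw [← sUnion_eq_biUnion, (h𝒰 0).2.2.1])
  exact (hnofin 0 ⟨ℱ, hℱsub, hℱfin, eq_univ_of_univ_subset (by rwa [sUnion_eq_biUnion])⟩).elim

/-- If some countable open cover `𝒞` has no finite subcover, the refinements `{V n k ∩ C}`
are admissible in `IsHurewicz`; otherwise some `V n k` is already all of `Y`. -/
lemma IsHurewicz.exists_eventually_mem (hY : IsHurewicz Y) {V : ℕ → ℕ → Set Y}
    (hopen : ∀ n k, IsOpen (V n k)) (hmono : ∀ n, Monotone (V n))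
    (hcover : ∀ n, ⋃ k, V n k = Set.univ) :
    ∃ f : ℕ → ℕ, ∀ y, ∀ᶠ n in atTop, y ∈ V n (f n) := by
  by_cases h : ∃ 𝒞 : Set (Set Y), IsCountableOpenCover 𝒞 ∧ ¬ ContainsFinSubcover 𝒞
  · obtain ⟨𝒞, ⟨h𝒞count, h𝒞open, h𝒞cov, h𝒞univ⟩, h𝒞fin⟩ := h
    set 𝒱 : ℕ → Set (Set Y) := fun n => image2 (· ∩ ·) (range (V n)) 𝒞
    have h𝒱cov : ∀ n, IsCountableOpenCover (𝒱 n) := by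
      intro n
      refine ⟨(countable_range _).image2 h𝒞count _, ?_, ?_, ?_⟩
      · rintro _ ⟨_, ⟨k, rfl⟩, C, hC, rfl⟩
        exact (hopen n k).inter (h𝒞open C hC)
      · refine eq_univ_of_forall fun y => ?_
        obtain ⟨C, hC, hyC⟩ := mem_sUnion.1 (h𝒞cov ▸ mem_univ y)
        obtain ⟨k, hyk⟩ := mem_iUnion.1 (hcover n ▸ mem_univ y)
        exact ⟨_, ⟨_, ⟨k, rfl⟩, C, hC, rfl⟩, hyk, hyC⟩
      · rintro ⟨_, ⟨k, rfl⟩, C, hC, hkC⟩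
        have hCuniv : Set.univ ⊆ C := hkC.symm.subset.trans inter_subset_right
        exact h𝒞univ (eq_univ_of_univ_subset hCuniv ▸ hC)
    have h𝒱fin : ∀ n, ¬ ContainsFinSubcover (𝒱 n) := fun n h𝒱 =>
      h𝒞fin <| h𝒱.of_refines fun _ ⟨_, _, C, hC, hA⟩ => ⟨C, hC, hA ▸ inter_subset_right⟩
    obtain ⟨ℱ, hℱsub, hℱfin, hℱev⟩ := hY 𝒱 h𝒱cov h𝒱fin
    choose f hf using fun n => (hmono n).exists_sUnion_subset (hℱfin n) fun A hA => by
      obtain ⟨_, ⟨k, rfl⟩, C, -, rfl⟩ := hℱsub n hA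
      exact ⟨k, inter_subset_left⟩
    exact ⟨f, fun y => (hℱev y).mono fun n hn => hf n hn⟩
  · push Not at h
    have hstab : ∀ n, ∃ k, V n k = Set.univ := by
      intro n
      by_cases hk : Set.univ ∈ range (V n)
      · exact hk
      obtain ⟨ℱ, hℱsub, hℱfin, hℱcov⟩ := h _
        ⟨countable_range _, forall_mem_range.2 (hopen n), by rw [sUnion_range, hcover n], hk⟩
      obtain ⟨m, hm⟩ := (hmono n).exists_sUnion_subset hℱfin fun A hA => by
        obtain ⟨k, rfl⟩ := hℱsub hA
        exact ⟨k, subset_rfl⟩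
      exact ⟨m, eq_univ_of_univ_subset (hℱcov ▸ hm)⟩
    choose f hf using hstab
    exact ⟨f, fun y => Eventually.of_forall fun n => hf n ▸ mem_univ y⟩

end Covers

lemma memSub_hurewicz_of_isCompact {X : Type} [t : TopologicalSpace X] {S : Set X}
    (hS : IsCompact S) : memSub HurewiczClass t S :=
  @isHurewicz_of_compactSpace S (subspaceTop t S) (isCompact_iff_compactSpace.mp hS)

lemma exists_eventually_mem_of_memSub_hurewicz {X : Type} {t : TopologicalSpace X} {S : Set X}
    (hS : memSub HurewiczClass t S) {U : ℕ → ℕ → Set X} (hopen : ∀ n j, IsOpen (U n j))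
    (hcover : ∀ n, ⋃ j, U n j = Set.univ) :
    ∃ f : ℕ → ℕ, ∀ x ∈ S, ∀ᶠ n in atTop, ∃ j ≤ f n, x ∈ U n j := by
  obtain ⟨f, hf⟩ := IsHurewicz.exists_eventually_mem (Y := S) hS
    (V := fun n k => Subtype.val ⁻¹' ⋃ j ∈ Iic k, U n j)
    (fun n k => (isOpen_biUnion fun j _ => hopen n j).preimage continuous_subtype_val)
    (fun n _ _ hkk' => preimage_mono (biUnion_subset_biUnion_left (Iic_subset_Iic.2 hkk')))
    (fun n => eq_univ_of_forall fun x => by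
      obtain ⟨j, hj⟩ := mem_iUnion.1 (hcover n ▸ mem_univ x.1)
      exact mem_iUnion.2 ⟨j, mem_biUnion (mem_Iic.2 le_rfl) hj⟩)
  exact ⟨f, fun x hx => (hf ⟨x, hx⟩).mono fun n hn => by simpa using hn⟩

lemma exists_dominating_of_card_frakd :
    ∃ D : Set (ℕ → ℕ), #D = frakd ∧ ∀ g : ℕ → ℕ, ∃ f ∈ D, ∀ᶠ n in atTop, g n ≤ f n :=
  csInf_mem (s := {c | ∃ D : Set (ℕ → ℕ), #D = c ∧ ∀ g : ℕ → ℕ, ∃ f ∈ D, ∀ᶠ n in atTop, g n ≤ f n})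
    ⟨_, Set.univ, rfl, fun g => ⟨g, mem_univ g, Eventually.of_forall fun _ => le_rfl⟩⟩

lemma exists_frequently_lt_of_mk_lt_frakd {F : Set (ℕ → ℕ)} (hF : #F < frakd) :
    ∃ g : ℕ → ℕ, ∀ f ∈ F, ∃ᶠ n in atTop, f n < g n := by
  by_contra! h
  exact hF.not_ge (csInf_le' ⟨F, rfl, h⟩)

lemma aleph0_le_frakd : ℵ₀ ≤ frakd := by
  by_contra! h
  obtain ⟨D, hDcard, hDdom⟩ := exists_dominating_of_card_frakd
  have hD : D.Finite := lt_aleph0_iff_set_finite.mp (hDcard ▸ h)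
  obtain ⟨f, hfD, hev⟩ := hDdom fun n => hD.toFinset.sup (· n) + 1
  obtain ⟨n, hn⟩ := hev.exists
  have hle : f n ≤ hD.toFinset.sup (· n) := Finset.le_sup (f := (· n)) (hD.mem_toFinset.mpr hfD)
  omega

lemma exists_le_sup_const_of_eventually_le {f g : ℕ → ℕ} (h : ∀ᶠ n in atTop, g n ≤ f n) :
    ∃ c : ℕ, g ≤ f ⊔ fun _ => c := by
  obtain ⟨M, hM⟩ := eventually_atTop.1 h
  refine ⟨(Finset.range M).sup g, fun n => ?_⟩
  rcases le_or_gt M n with hn | hn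
  · exact le_sup_of_le_left (hM n hn)
  · exact le_sup_of_le_right (Finset.le_sup (Finset.mem_range.2 hn))

lemma exists_isCompact_cover_baire :
    ∃ 𝒮 : Set (Set (ℕ → ℕ)), #𝒮 ≤ frakd ∧ ⋃₀ 𝒮 = Set.univ ∧ ∀ S ∈ 𝒮, IsCompact S := by
  obtain ⟨D, hDcard, hDdom⟩ := exists_dominating_of_card_frakd
  refine ⟨range fun q : D × ℕ => Icc 0 (q.1.1 ⊔ fun _ => q.2), ?_, ?_, ?_⟩
  · calc _ ≤ #(D × ℕ) := mk_range_le
      _ = frakd := by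
        rw [mk_prod, lift_id, lift_id, mk_nat, hDcard,
          mul_eq_left aleph0_le_frakd aleph0_le_frakd aleph0_ne_zero]
  · refine eq_univ_of_forall fun g => ?_
    obtain ⟨f, hfD, hev⟩ := hDdom g
    obtain ⟨c, hc⟩ := exists_le_sup_const_of_eventually_le hev
    exact ⟨_, ⟨(⟨f, hfD⟩, c), rfl⟩, fun _ => Nat.zero_le _, hc⟩
  · rintro _ ⟨q, rfl⟩
    exact isCompact_Icc

/-- The covers by the sets `{g | g n ≤ k}` admit no selection: finitely many of them bound
`g n` for each `n`, and one more than that bound escapes them all. -/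
lemma not_isMenger_baire : ¬ IsMenger (ℕ → ℕ) := by
  intro hM
  set C : ℕ → ℕ → Set (ℕ → ℕ) := fun n k => {g | g n ≤ k}
  have hCmono : ∀ n, Monotone (C n) := fun n _ _ hkk' _ hg => le_trans hg hkk'
  have hcov : ∀ n, IsCountableOpenCover (range (C n)) := by
    intro n
    refine ⟨countable_range _, ?_, ?_, ?_⟩
    · rintro _ ⟨k, rfl⟩
      exact (isOpen_discrete (Iic k)).preimage (continuous_apply n :
        Continuous fun g : ℕ → ℕ => g n)
    · exact eq_univ_of_forall fun g => ⟨C n (g n), ⟨g n, rfl⟩, (le_rfl : g n ≤ g n)⟩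
    · rintro ⟨k, hk⟩
      have : (fun _ => k + 1) ∈ C n k := hk ▸ mem_univ _
      exact Nat.not_succ_le_self k this
  obtain ⟨ℱ, hℱsub, hℱfin, hℱcov⟩ := hM _ hcov
  choose m hm using fun n => (hCmono n).exists_sUnion_subset (hℱfin n) fun A hA => by
    obtain ⟨k, rfl⟩ := hℱsub n hA
    exact ⟨k, subset_rfl⟩
  obtain ⟨n, hn⟩ := mem_iUnion.1 (hℱcov ▸ mem_univ (m + 1))
  exact Nat.not_succ_le_self (m n) (hm n hn)

lemma isMenger_of_sUnion_hurewicz {X : Type} {t : TopologicalSpace X} (𝒮 : Set (Set X))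
    (hcard : #𝒮 < frakd) (hcover : ⋃₀ 𝒮 = Set.univ) (hH : ∀ S ∈ 𝒮, memSub HurewiczClass t S) :
    IsMenger X := by
  intro 𝒰 h𝒰
  rcases isEmpty_or_nonempty X with _ | _
  · exact ⟨fun _ => ∅, fun _ => empty_subset _, fun _ => finite_empty, Subsingleton.elim _ _⟩
  choose U hU using fun n => (h𝒰 n).1.exists_eq_range (Nonempty.of_sUnion_eq_univ (h𝒰 n).2.2.1)
  have hUopen : ∀ n j, IsOpen (U n j) := fun n j => (h𝒰 n).2.1 _ (hU n ▸ mem_range_self j)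
  have hUcover : ∀ n, ⋃ j, U n j = Set.univ := fun n => by rw [← sUnion_range, ← hU n, (h𝒰 n).2.2.1]
  choose! f hf using fun S hS => exists_eventually_mem_of_memSub_hurewicz (hH S hS) hUopen hUcover
  obtain ⟨g, hg⟩ := exists_frequently_lt_of_mk_lt_frakd (mk_image_le.trans_lt hcard)
  refine ⟨fun n => U n '' Iic (g n), fun n => ?_, fun n => (finite_Iic _).image _, ?_⟩
  · rintro _ ⟨j, -, rfl⟩
    exact hU n ▸ mem_range_self j
  refine eq_univ_of_forall fun x => ?_
  obtain ⟨S, hS, hxS⟩ := mem_sUnion.1 (hcover ▸ mem_univ x)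
  obtain ⟨n, hlt, j, hj, hxj⟩ :=
    ((hg _ (mem_image_of_mem f hS)).and_eventually (hf S hS x hxS)).exists
  exact mem_iUnion.2 ⟨n, _, ⟨j, hj.trans hlt.le, rfl⟩, hxj⟩

/-- add(Ufin(O,Γ), Sfin(O,O)) = 𝔡. -/
theorem addHurewicz_Menger_eq_frakd :
    classAdd HurewiczClass MengerClass = frakd := by
  obtain ⟨𝒮, h𝒮card, h𝒮cover, h𝒮compact⟩ := exists_isCompact_cover_baire
  have hmem : #𝒮 ∈ {c | ∃ (X : Type) (t : TopologicalSpace X) (𝒯 : Set (Set X)),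
      #𝒯 = c ∧ ⋃₀ 𝒯 = Set.univ ∧ (∀ S ∈ 𝒯, memSub HurewiczClass t S) ∧ ¬ MengerClass X t} :=
    ⟨ℕ → ℕ, _, 𝒮, rfl, h𝒮cover, fun S hS => memSub_hurewicz_of_isCompact (h𝒮compact S hS),
      not_isMenger_baire⟩
  refine le_antisymm ((csInf_le' hmem).trans h𝒮card) (le_csInf ⟨_, hmem⟩ ?_)
  rintro _ ⟨X, t, 𝒯, rfl, hcover, hH, hnM⟩
  by_contra! hlt
  exact hnM (isMenger_of_sUnion_hurewicz 𝒯 hlt hcover hH)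
end

section
/- For every infinite cardinal κ and every ordinal α, the class K_α(κ) is closed under products with compact regular spaces: if C ∈ K_α(κ) and Z is a compact regular space, then C×Z ∈ K_α(κ). -/
open Set Filter Cardinal

/-! `K_α(κ)` is closed under perfect preimages, by induction on `α`: compact sets and covers pull
back along a proper map `f`. For the σ-compact clause, `f ⁻¹' D` is the new witness; given an open
`U ⊇ f ⁻¹' D`, the set `(f '' Uᶜ)ᶜ ⊇ D` is open because `f` is closed, and `Uᶜ` is a perfect
preimage of `f '' Uᶜ`, the complement of that open set. The projection `C × Z → C` is proper
since `Z` is compact. -/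

lemma KHier_zero (κ : Cardinal) :
    KHier κ 0 = fun X t => @RegularSpace X t ∧ @IsKUnion κ X t :=
  Ordinal.limitRecOn_zero _ _ _

lemma KHier_add_one (κ : Cardinal) (β : Ordinal) :
    KHier κ (β + 1) = KHierStep κ (KHier κ β) :=
  Ordinal.limitRecOn_add_one _ _ _ _

lemma KHier_limit (κ : Cardinal) {o : Ordinal} (ho : Order.IsSuccLimit o) :
    KHier κ o = fun X t => ∃ β, ∃ _ : β < o, KHier κ β X t :=
  Ordinal.limitRecOn_limit _ _ _ _ ho

lemma regularSpace_of_KHier (κ : Cardinal) (α : Ordinal) {X : Type} (tX : TopologicalSpace X)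
    (hX : KHier κ α X tX) : RegularSpace X := by
  induction α using Ordinal.limitRecOn with
  | zero => rw [KHier_zero] at hX; exact hX.1
  | add_one β _ => rw [KHier_add_one] at hX; exact hX.1
  | limit o ho ih =>
    rw [KHier_limit κ ho] at hX
    obtain ⟨β, hβ, hX⟩ := hX
    exact ih β hβ hX

/-- The map `f` need not be onto, so this includes closed subspaces. -/
def ClosedUnderPerfectPreimage (P : SpaceClass) : Prop :=
  ∀ ⦃X Y : Type⦄ [tX : TopologicalSpace X] [tY : TopologicalSpace Y] (f : Y → X),
    IsProperMap f → RegularSpace Y → P X tX → P Y tY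

section PerfectPreimage

variable {X Y : Type} [tX : TopologicalSpace X] [tY : TopologicalSpace Y] {f : Y → X}

lemma IsProperMap.mapsToRestrict (hf : IsProperMap f) {T : Set Y} {S : Set X}
    (hT : IsClosed T) (hTS : MapsTo f T S) : IsProperMap (hTS.restrict f T S) :=
  isProperMap_of_comp_of_inj (hf.continuous.restrict hTS) continuous_subtype_val
    (hf.restrict hT) Subtype.val_injective

lemma ClosedUnderPerfectPreimage.memSub {P : SpaceClass} (hP : ClosedUnderPerfectPreimage P)
    [RegularSpace Y] {S : Set X} {T : Set Y} (g : T → S) (hg : IsProperMap g)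
    (hS : memSub P tX S) : memSub P tY T :=
  have : RegularSpace T := inferInstance
  hP g hg this hS

omit tX tY in
lemma sUnion_image_preimage_eq_univ {𝒮 : Set (Set X)} (h𝒮 : ⋃₀ 𝒮 = Set.univ) (f : Y → X) :
    ⋃₀ ((f ⁻¹' ·) '' 𝒮) = Set.univ := by
  rw [sUnion_image, ← preimage_sUnion, h𝒮, preimage_univ]

lemma IsKUnion.of_isProperMap {κ : Cardinal} (hf : IsProperMap f) (hX : IsKUnion κ X) :
    IsKUnion κ Y := by
  obtain ⟨𝒮, hcard, hcompact, hcover⟩ := hX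
  refine ⟨(f ⁻¹' ·) '' 𝒮, mk_image_le.trans_lt hcard, ?_, sUnion_image_preimage_eq_univ hcover f⟩
  rintro _ ⟨S, hS, rfl⟩
  exact hf.isCompact_preimage (hcompact S hS)

lemma IsSigmaCompactSet.preimage_of_isProperMap (hf : IsProperMap f) {D : Set X}
    (hD : IsSigmaCompactSet D) : IsSigmaCompactSet (f ⁻¹' D) := by
  obtain ⟨K, hK, rfl⟩ := hD
  exact ⟨fun n => f ⁻¹' K n, fun n => hf.isCompact_preimage (hK n), preimage_iUnion⟩

lemma KHierStep.of_isProperMap {κ : Cardinal} {P : SpaceClass}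
    (hP : ClosedUnderPerfectPreimage P) [RegularSpace Y] (hf : IsProperMap f)
    (hX : KHierStep κ P X tX) : KHierStep κ P Y tY := by
  refine ⟨‹_›, ?_⟩
  rcases hX.2 with ⟨D, hD, hDU⟩ | ⟨𝒮, hcard, hcover, h𝒮⟩
  · refine .inl ⟨f ⁻¹' D, hD.preimage_of_isProperMap hf, fun U hU hfDU => ?_⟩
    have hV : IsOpen (f '' Uᶜ)ᶜ := (hf.isClosedMap _ hU.isClosed_compl).isOpen_compl
    have hDV : D ⊆ (f '' Uᶜ)ᶜ := by
      rintro x hx ⟨y, hyU, rfl⟩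
      exact hyU (hfDU hx)
    have hmaps : MapsTo f Uᶜ (f '' Uᶜ)ᶜᶜ := by
      rw [compl_compl]
      exact mapsTo_image f _
    exact hP.memSub _ (hf.mapsToRestrict hU.isClosed_compl hmaps) (hDU _ hV hDV)
  · refine .inr ⟨(f ⁻¹' ·) '' 𝒮, mk_image_le.trans_lt hcard,
      sUnion_image_preimage_eq_univ hcover f, ?_⟩
    rintro _ ⟨S, hS, rfl⟩
    exact hP.memSub _ (hf.restrictPreimage S) (h𝒮 S hS)

end PerfectPreimage

theorem closedUnderPerfectPreimage_KHier (κ : Cardinal) (α : Ordinal) :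
    ClosedUnderPerfectPreimage (KHier κ α) := by
  intro X Y tX tY f hf hY hX
  induction α using Ordinal.limitRecOn generalizing X Y with
  | zero =>
    rw [KHier_zero] at hX ⊢
    exact ⟨hY, hX.2.of_isProperMap hf⟩
  | add_one β ih =>
    rw [KHier_add_one] at hX ⊢
    exact KHierStep.of_isProperMap ih hf hX
  | limit o ho ih =>
    rw [KHier_limit κ ho] at hX ⊢
    obtain ⟨β, hβ, hX⟩ := hX
    exact ⟨β, hβ, ih β hβ f hf hY hX⟩

theorem KHier_closed_under_compact_products_general (kappa : Cardinal) (α : Ordinal)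
    (C Z : Type) (tC : TopologicalSpace C) (tZ : TopologicalSpace Z)
    (hC : KHier kappa α C tC) (hZc : @CompactSpace Z tZ) (hZr : @RegularSpace Z tZ) :
    KHier kappa α (C × Z) (prodTop tC tZ) := by
  have : RegularSpace C := regularSpace_of_KHier kappa α tC hC
  have hCZ : RegularSpace (C × Z) := inferInstance
  exact closedUnderPerfectPreimage_KHier kappa α Prod.fst isProperMap_fst_of_compactSpace hCZ hC

/-- For every infinite cardinal `κ` and every ordinal `α`, the class `K_α(κ)` is closed
under products with compact regular spaces. -/
theorem KHier_closed_under_compact_products (kappa : Cardinal)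
    (hkappa : Cardinal.aleph0 ≤ kappa) (α : Ordinal)
    (C Z : Type) (tC : TopologicalSpace C) (tZ : TopologicalSpace Z)
    (hC : KHier kappa α C tC) (hZc : @CompactSpace Z tZ) (hZr : @RegularSpace Z tZ) :
    KHier kappa α (C × Z) (prodTop tC tZ) :=
  KHier_closed_under_compact_products_general kappa α C Z tC tZ hC hZc hZr
end
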